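/- arXiv:1610.02063 — 5 statements merged into one kernel-verified Lean document; each statement's English description precedes it below -/
import Mathlib

section
/- For positive integers x_1, ..., x_m, the number ES(x_1,...,x_m) of sign vectors (ε_1,...,ε_m) ∈ {-1,1}^m with ∑_j ε_j x_j = 0 satisfies ES(x_1,...,x_m) ≤ (2 * C(2m-1, m))^{1/2}. -/
/-!
A balancing sign vector `ε` is determined by the set `S = {j | ε j = 1}`, which carries exactly
half of the total weight. Gluing two such sets along `ι ⊕ ι` gives a set whose weight is the
total weight; as the weights are positive, sets of equal weight form an antichain, so Sperner's
theorem bounds the number `N` of solutions by `N² ≤ C(2m, m) ≤ 2 C(2m - 1, m)`.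
-/

open Finset

section WeightedAntichain

variable {α M : Type*} [AddCommMonoid M] [PartialOrder M] [IsOrderedCancelAddMonoid M]
  {w : α → M} {𝒜 : Finset (Finset α)} {c : M}

theorem Finset.isAntichain_of_sum_eq (hw : ∀ a, 0 < w a) (h𝒜 : ∀ s ∈ 𝒜, ∑ a ∈ s, w a = c) :
    IsAntichain (· ⊆ ·) (𝒜 : Set (Finset α)) := by
  intro s hs t ht hne hst
  obtain ⟨a, hat, has⟩ := exists_of_ssubset (hst.ssubset_of_ne hne)
  have hlt := sum_lt_sum_of_subset hst hat has (hw a) fun b _ _ => (hw b).le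
  rw [h𝒜 s hs, h𝒜 t ht] at hlt
  exact lt_irrefl c hlt

theorem Finset.card_mul_self_le_centralBinom_of_sum_eq [Fintype α] (hw : ∀ a, 0 < w a)
    (h𝒜 : ∀ s ∈ 𝒜, ∑ a ∈ s, w a = c) :
    #𝒜 * #𝒜 ≤ (Fintype.card α).centralBinom := by
  classical
  set glue : Finset α × Finset α → Finset (α ⊕ α) := fun p => p.1.disjSum p.2
  have glue_injective : Function.Injective glue := fun p q h => by
    simpa [glue, Prod.ext_iff] using h
  have antichain : IsAntichain (· ⊆ ·) ((𝒜 ×ˢ 𝒜).image glue : Set (Finset (α ⊕ α))) := by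
    refine isAntichain_of_sum_eq (w := Sum.elim w w) (c := c + c)
      (by rintro (a | a) <;> exact hw a) ?_
    simp only [mem_image, mem_product]
    rintro _ ⟨⟨s, t⟩, ⟨hs, ht⟩, rfl⟩
    rw [sum_disjSum]
    exact congr_arg₂ (· + ·) (h𝒜 s hs) (h𝒜 t ht)
  calc #𝒜 * #𝒜 = #((𝒜 ×ˢ 𝒜).image glue) := by
        rw [card_image_of_injective _ glue_injective, card_product]
    _ ≤ (Fintype.card (α ⊕ α)).choose (Fintype.card (α ⊕ α) / 2) := antichain.sperner
    _ = (Fintype.card α).centralBinom := by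
        rw [Fintype.card_sum, ← two_mul, Nat.mul_div_cancel_left _ two_pos,
          Nat.centralBinom_eq_two_mul_choose]

end WeightedAntichain

theorem Nat.centralBinom_le_two_mul_choose (n : ℕ) :
    n.centralBinom ≤ 2 * (2 * n - 1).choose n := by
  cases n with
  | zero => simp
  | succ k =>
    rw [Nat.centralBinom_eq_two_mul_choose, show 2 * (k + 1) = 2 * k + 1 + 1 by ring,
      Nat.add_sub_cancel, Nat.choose_succ_succ', Nat.choose_symm_half]
    omega

section SignVectors

variable {ι : Type*} [Fintype ι]

theorem sum_sign_mul_eq_two_mul_sum_filter_sub {ε : ι → ℤ} (hε : ∀ j, ε j = 1 ∨ ε j = -1)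
    (x : ι → ℤ) :
    ∑ j, ε j * x j = 2 * ∑ j with ε j = 1, x j - ∑ j, x j := by
  rw [sum_filter, mul_sum, ← sum_sub_distrib]
  refine sum_congr rfl fun j _ => ?_
  rcases hε j with h | h
  · simp only [h, if_true]; ring
  · simp [h]

theorem card_signVectors_sum_mul_eq_zero_le [DecidableEq ι] (x : ι → ℕ) :
    Nat.card {ε : ι → ℤ // (∀ j, ε j = 1 ∨ ε j = -1) ∧ ∑ j, ε j * (x j : ℤ) = 0} ≤
      #{S : Finset ι | 2 * ∑ j ∈ S, x j = ∑ j, x j} := by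
  let half (ε : {ε : ι → ℤ // (∀ j, ε j = 1 ∨ ε j = -1) ∧ ∑ j, ε j * (x j : ℤ) = 0}) :
      {S : Finset ι // 2 * ∑ j ∈ S, x j = ∑ j, x j} :=
    ⟨({j | ε.1 j = 1} : Finset ι), by
      have := ε.2.2
      rw [sum_sign_mul_eq_two_mul_sum_filter_sub ε.2.1] at this
      exact_mod_cast (sub_eq_zero.1 this)⟩
  have half_injective : Function.Injective half := by
    rintro ⟨ε, hε, _⟩ ⟨δ, hδ, _⟩ hεδ
    ext j
    have hj : ε j = 1 ↔ δ j = 1 := by simpa [half] using congrArg (fun S => j ∈ S.1) hεδ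
    rcases hε j with h1 | h1 <;> rcases hδ j with h2 | h2 <;> simp_all
  calc _ ≤ Nat.card {S : Finset ι // 2 * ∑ j ∈ S, x j = ∑ j, x j} :=
        Nat.card_le_card_of_injective half half_injective
    _ = _ := by rw [Nat.card_eq_fintype_card, Fintype.card_subtype]

end SignVectors

theorem stmt_6 (m : ℕ) (x : Fin m → ℕ) (hx : ∀ j, 0 < x j) :
    (Nat.card {ε : Fin m → ℤ // (∀ j, ε j = 1 ∨ ε j = -1) ∧
        ∑ j, ε j * (x j : ℤ) = 0} : ℝ) ≤
      Real.sqrt (2 * ((2 * m - 1).choose m : ℝ)) := by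
  set N := Nat.card {ε : Fin m → ℤ // (∀ j, ε j = 1 ∨ ε j = -1) ∧ ∑ j, ε j * (x j : ℤ) = 0}
  set 𝒜 : Finset (Finset (Fin m)) := {S | 2 * ∑ j ∈ S, x j = ∑ j, x j}
  have balanced : ∀ S ∈ 𝒜, ∑ j ∈ S, x j = (∑ j, x j) / 2 := fun S hS => by
    rw [← (mem_filter.1 hS).2]; omega
  have hN : N * N ≤ 2 * (2 * m - 1).choose m :=
    calc N * N ≤ #𝒜 * #𝒜 := Nat.mul_self_le_mul_self (card_signVectors_sum_mul_eq_zero_le x)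
      _ ≤ (Fintype.card (Fin m)).centralBinom :=
        card_mul_self_le_centralBinom_of_sum_eq hx balanced
      _ ≤ 2 * (2 * m - 1).choose m := by
        rw [Fintype.card_fin]; exact Nat.centralBinom_le_two_mul_choose m
  rw [Real.le_sqrt (by positivity) (by positivity), sq]
  exact_mod_cast hN
end

section
/- If p is a prime, n = p - 1, and δ : {0,...,n} → {-1,1} satisfies ∑_{j=0}^n δ_j * C(n,j) = 0, then either δ_j = (-1)^j for all j, or δ_j = (-1)^{j+1} for all j. In other words, the binomial coefficient bisection problem for n = p-1 has exactly 2 solutions. -/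
/-!
Modulo `p` we have `C(p-1, j) ≡ (-1)^j`, so `S = ∑ δ_j (-1)^j` is congruent to the vanishing
sum `∑ δ_j C(p-1, j)` and hence divisible by `p`. But `S` is a sum of `p` signs, so `|S| ≤ p`,
and `S ≠ 0` (for odd `p` it is odd). Therefore `|S| = p`, which forces all signs
`δ_j (-1)^j` to be equal.
-/

open Finset

theorem Nat.Prime.choose_pred_modEq_neg_one_pow {p : ℕ} (hp : p.Prime) :
    ∀ {j : ℕ}, j < p → ((p - 1).choose j : ℤ) ≡ (-1) ^ j [ZMOD p]
  | 0, _ => by simp [Int.ModEq.refl]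
  | j + 1, hj => by
    have hpascal : ((p - 1).choose j : ℤ) + (p - 1).choose (j + 1) = p.choose (j + 1) := by
      have := Nat.choose_succ_succ' (p - 1) j
      rw [Nat.sub_add_cancel hp.one_le] at this
      exact_mod_cast this.symm
    have hdvd : (p.choose (j + 1) : ℤ) ≡ 0 [ZMOD p] :=
      Int.modEq_zero_iff_dvd.mpr <|
        Int.natCast_dvd_natCast.mpr (hp.dvd_choose_self j.succ_ne_zero hj)
    calc ((p - 1).choose (j + 1) : ℤ) = p.choose (j + 1) - (p - 1).choose j := by linarith
      _ ≡ 0 - (-1) ^ j [ZMOD p] := hdvd.sub (hp.choose_pred_modEq_neg_one_pow (by omega))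
      _ = (-1) ^ (j + 1) := by ring

section Signs

variable {ι : Type*} {s : Finset ι} {ε : ι → ℤ}

theorem Finset.abs_sum_le_card_of_abs_le_one (hε : ∀ i ∈ s, |ε i| ≤ 1) :
    |∑ i ∈ s, ε i| ≤ #s := by
  calc |∑ i ∈ s, ε i| ≤ ∑ i ∈ s, |ε i| := abs_sum_le_sum_abs _ _
    _ ≤ ∑ _i ∈ s, 1 := sum_le_sum hε
    _ = #s := by simp

theorem Finset.sum_signs_modEq_card (hε : ∀ i ∈ s, ε i = 1 ∨ ε i = -1) :
    ∑ i ∈ s, ε i ≡ #s [ZMOD 2] := by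
  calc ∑ i ∈ s, ε i ≡ ∑ _i ∈ s, 1 [ZMOD 2] := Int.ModEq.sum fun i hi => by
        rcases hε i hi with h | h <;> rw [h]; rfl
    _ = #s := by simp

theorem Finset.forall_eq_one_of_sum_eq_card (hε : ∀ i ∈ s, ε i = 1 ∨ ε i = -1)
    (hsum : ∑ i ∈ s, ε i = #s) : ∀ i ∈ s, ε i = 1 := by
  have hzero : ∑ i ∈ s, (1 - ε i) = 0 := by simp [sum_sub_distrib, hsum]
  intro i hi
  have := (sum_eq_zero_iff_of_nonneg fun k hk => ?_).mp hzero i hi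
  · linarith
  · rcases hε k hk with h | h <;> simp [h]

theorem Finset.signs_const_of_abs_sum_eq_card (hε : ∀ i ∈ s, ε i = 1 ∨ ε i = -1)
    (hsum : |∑ i ∈ s, ε i| = #s) : (∀ i ∈ s, ε i = 1) ∨ (∀ i ∈ s, ε i = -1) := by
  rcases abs_eq (Int.natCast_nonneg #s) |>.mp hsum with h | h
  · exact .inl (forall_eq_one_of_sum_eq_card hε h)
  · have hneg : ∀ i ∈ s, -ε i = 1 ∨ -ε i = -1 := fun i hi => by
      rcases hε i hi with h | h <;> simp [h]
    have := forall_eq_one_of_sum_eq_card hneg (by rw [sum_neg_distrib, h, neg_neg])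
    exact .inr fun i hi => by linarith [this i hi]

end Signs

theorem eq_mul_neg_one_pow_of_mul_neg_one_pow_eq {R : Type*} [CommRing R] {a b : R} {j : ℕ}
    (h : a * (-1) ^ j = b) : a = b * (-1) ^ j := by
  rw [← h, mul_assoc, ← mul_pow]
  simp

theorem mul_neg_one_pow_eq_one_or_eq_neg_one {a : ℤ} (ha : a = 1 ∨ a = -1) (j : ℕ) :
    a * (-1) ^ j = 1 ∨ a * (-1) ^ j = -1 := by
  rcases ha with rfl | rfl <;> rcases neg_one_pow_eq_or ℤ j with h | h <;> simp [h]

theorem sum_mul_choose_pred_prime_modEq {p : ℕ} (hp : p.Prime) (δ : ℕ → ℤ) :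
    ∑ j ∈ range p, δ j * ((p - 1).choose j : ℤ) ≡
      ∑ j ∈ range p, δ j * (-1) ^ j [ZMOD p] :=
  Int.ModEq.sum fun _ hj =>
    (Nat.Prime.choose_pred_modEq_neg_one_pow hp (mem_range.mp hj)).mul_left _

theorem sum_mul_neg_one_pow_ne_zero {p : ℕ} {δ : ℕ → ℤ} (hp : p.Prime)
    (hδ : ∀ j ∈ range p, δ j = 1 ∨ δ j = -1)
    (hsum : ∑ j ∈ range p, δ j * ((p - 1).choose j : ℤ) = 0) :
    ∑ j ∈ range p, δ j * (-1) ^ j ≠ 0 := by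
  rcases hp.eq_two_or_odd' with rfl | hodd
  · simp only [sum_range_succ, range_zero, sum_empty] at hsum ⊢
    have := hδ 0 (by simp)
    norm_num at hsum ⊢
    omega
  · intro hzero
    have hmod := sum_signs_modEq_card fun j hj => mul_neg_one_pow_eq_one_or_eq_neg_one (hδ j hj) j
    rw [hzero, card_range] at hmod
    have := Nat.odd_iff.mp hodd
    unfold Int.ModEq at hmod
    omega

theorem stmt_12 (p : ℕ) (hp : p.Prime) (n : ℕ) (hn : n = p - 1) (δ : ℕ → ℤ)
    (hδ : ∀ j ≤ n, δ j = 1 ∨ δ j = -1)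
    (hsum : ∑ j ∈ Finset.range (n + 1), δ j * (n.choose j : ℤ) = 0) :
    (∀ j ≤ n, δ j = (-1) ^ j) ∨ (∀ j ≤ n, δ j = (-1) ^ (j + 1)) := by
  subst hn
  rw [Nat.sub_add_cancel hp.one_le] at hsum
  have hδ' : ∀ j ∈ range p, δ j = 1 ∨ δ j = -1 := fun j hj => hδ j (by grind)
  have hε : ∀ j ∈ range p, δ j * (-1) ^ j = 1 ∨ δ j * (-1) ^ j = -1 := fun j hj =>
    mul_neg_one_pow_eq_one_or_eq_neg_one (hδ' j hj) j
  set S := ∑ j ∈ range p, δ j * (-1) ^ j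
  have hdvd : (p : ℤ) ∣ S :=
    Int.modEq_zero_iff_dvd.mp (hsum ▸ sum_mul_choose_pred_prime_modEq hp δ).symm
  have hne : S ≠ 0 := sum_mul_neg_one_pow_ne_zero hp hδ' hsum
  have habs : |S| = #(range p) := by
    refine le_antisymm (abs_sum_le_card_of_abs_le_one fun j hj => ?_) ?_
    · rcases hε j hj with h | h <;> simp [h]
    · rw [card_range, ← Int.natCast_natAbs]
      exact_mod_cast Int.natAbs_le_of_dvd_ne_zero hdvd hne
  rcases signs_const_of_abs_sum_eq_card hε habs with h | h
  · refine .inl fun j hj => ?_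
    simpa using eq_mul_neg_one_pow_of_mul_neg_one_pow_eq (h j (by grind))
  · refine .inr fun j hj => ?_
    rw [pow_succ, eq_mul_neg_one_pow_of_mul_neg_one_pow_eq (h j (by grind))]
    ring
end

section
/- The integer solutions (n, x) with n > 1 and 0 ≤ x ≤ n-2 of the equation C(n,x) + C(n,x+2) = 2*C(n,x+1) are exactly those of the form n = k^2 - 2, x = (k^2 - k)/2 - 2 or x = (k^2 + k)/2 - 2, for an integer k ≥ 2. -/
theorem stmt_14 (n x : ℕ) (hn : 1 < n) (hx : x ≤ n - 2) :
    (n.choose x + n.choose (x + 2) = 2 * n.choose (x + 1)) ↔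
      ∃ k : ℕ, 2 ≤ k ∧ n + 2 = k ^ 2 ∧
        (2 * (x + 2) = k ^ 2 - k ∨ 2 * (x + 2) = k ^ 2 + k) := by
  have hxn : x + 2 ≤ n := by omega
  have h1 : n.choose (x + 1) * (x + 1) = n.choose x * (n - x) :=
    Nat.choose_succ_right_eq n x
  have h2 : n.choose (x + 2) * (x + 2) = n.choose (x + 1) * (n - (x + 1)) :=
    Nat.choose_succ_right_eq n (x + 1)
  have hb : 0 < n.choose (x + 1) := Nat.choose_pos (by omega)
  -- reduce to a polynomial equation
  have key : (n.choose x + n.choose (x + 2) = 2 * n.choose (x + 1)) ↔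
      ((x + 1) * (x + 2) + (n - x - 1) * (n - x) = 2 * (n - x) * (x + 2)) := by
    constructor
    · intro h
      have hmul : (n.choose x + n.choose (x + 2)) * ((n - x) * (x + 2)) =
          2 * n.choose (x + 1) * ((n - x) * (x + 2)) := by rw [h]
      have hexp : n.choose (x + 1) * ((x + 1) * (x + 2) + (n - x - 1) * (n - x)) =
          n.choose (x + 1) * (2 * (n - x) * (x + 2)) := by
        have e1 : n.choose x * (n - x) * (x + 2) = n.choose (x + 1) * (x + 1) * (x + 2) := by
          rw [h1]
        have e2 : n.choose (x + 2) * (x + 2) * (n - x) = n.choose (x + 1) * (n - x - 1) * (n - x) := by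
          have : n - (x + 1) = n - x - 1 := by omega
          rw [h2, this]
        calc n.choose (x + 1) * ((x + 1) * (x + 2) + (n - x - 1) * (n - x))
            = n.choose (x + 1) * (x + 1) * (x + 2) + n.choose (x + 1) * (n - x - 1) * (n - x) := by ring
          _ = n.choose x * (n - x) * (x + 2) + n.choose (x + 2) * (x + 2) * (n - x) := by rw [e1, e2]
          _ = (n.choose x + n.choose (x + 2)) * ((n - x) * (x + 2)) := by ring
          _ = 2 * n.choose (x + 1) * ((n - x) * (x + 2)) := hmul
          _ = n.choose (x + 1) * (2 * (n - x) * (x + 2)) := by ring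
      exact Nat.eq_of_mul_eq_mul_left hb hexp
    · intro h
      have hexp : n.choose (x + 1) * ((x + 1) * (x + 2) + (n - x - 1) * (n - x)) =
          n.choose (x + 1) * (2 * (n - x) * (x + 2)) := by rw [h]
      have e1 : n.choose x * (n - x) * (x + 2) = n.choose (x + 1) * (x + 1) * (x + 2) := by
        rw [h1]
      have e2 : n.choose (x + 2) * (x + 2) * (n - x) = n.choose (x + 1) * (n - x - 1) * (n - x) := by
        have : n - (x + 1) = n - x - 1 := by omega
        rw [h2, this]
      have hmul : (n.choose x + n.choose (x + 2)) * ((n - x) * (x + 2)) =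
          2 * n.choose (x + 1) * ((n - x) * (x + 2)) := by
        calc (n.choose x + n.choose (x + 2)) * ((n - x) * (x + 2))
            = n.choose x * (n - x) * (x + 2) + n.choose (x + 2) * (x + 2) * (n - x) := by ring
          _ = n.choose (x + 1) * (x + 1) * (x + 2) + n.choose (x + 1) * (n - x - 1) * (n - x) := by rw [e1, e2]
          _ = n.choose (x + 1) * ((x + 1) * (x + 2) + (n - x - 1) * (n - x)) := by ring
          _ = n.choose (x + 1) * (2 * (n - x) * (x + 2)) := hexp
          _ = 2 * n.choose (x + 1) * ((n - x) * (x + 2)) := by ring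
      have hpos : 0 < (n - x) * (x + 2) := by
        have : 0 < n - x := by omega
        positivity
      exact Nat.eq_of_mul_eq_mul_right hpos hmul
  rw [key]
  have hcast : ∀ a b : ℕ, a ≤ b → ((b - a : ℕ) : ℤ) = (b : ℤ) - a := fun a b h => by omega
  constructor
  · intro h
    have hz : ((x : ℤ) + 1) * (x + 2) + ((n : ℤ) - x - 1) * (n - x) = 2 * ((n : ℤ) - x) * (x + 2) := by
      zify [show x ≤ n by omega, show 1 ≤ n - x by omega] at h
      linarith [h]
    have hsq : ((n : ℤ) - 2 * x - 2) ^ 2 = n + 2 := by linear_combination hz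
    by_cases hc : 2 * x + 2 ≤ n
    · set k := n - 2 * x - 2 with hkdef
      have hkz : (k : ℤ) = (n : ℤ) - 2 * x - 2 := by omega
      have hk2 : (k : ℤ) ^ 2 = (n : ℤ) + 2 := by rw [hkz]; exact hsq
      have hkn : k ^ 2 = n + 2 := by exact_mod_cast hk2
      refine ⟨k, ?_, hkn.symm, Or.inl ?_⟩
      · by_contra hlt
        have : k ^ 2 ≤ 1 ^ 2 := Nat.pow_le_pow_left (by omega) 2
        omega
      · rw [hkn]; omega
    · set k := 2 * x + 2 - n with hkdef
      have hkz : (k : ℤ) = 2 * (x : ℤ) + 2 - n := by omega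
      have hk2 : (k : ℤ) ^ 2 = (n : ℤ) + 2 := by rw [hkz]; linear_combination hsq
      have hkn : k ^ 2 = n + 2 := by exact_mod_cast hk2
      refine ⟨k, ?_, hkn.symm, Or.inr ?_⟩
      · by_contra hlt
        have : k ^ 2 ≤ 1 ^ 2 := Nat.pow_le_pow_left (by omega) 2
        omega
      · rw [hkn]; omega
  · rintro ⟨k, hk, hn2, hcase⟩
    have hkk : k ≤ k ^ 2 := Nat.le_self_pow two_ne_zero _
    have hn2' : (n : ℤ) + 2 = (k : ℤ) ^ 2 := by exact_mod_cast hn2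
    have hsq' : ((n : ℤ) - 2 * x - 2) ^ 2 = (n : ℤ) + 2 := by
      rcases hcase with hc | hc
      · have hc' : 2 * ((x : ℤ) + 2) = (k : ℤ) ^ 2 - k := by
          zify [hkk] at hc; exact hc
        have hk' : (n : ℤ) - 2 * x - 2 = k := by linarith
        rw [hk']; linarith
      · have hc' : 2 * ((x : ℤ) + 2) = (k : ℤ) ^ 2 + k := by exact_mod_cast hc
        have hk' : (n : ℤ) - 2 * x - 2 = -k := by linarith
        rw [hk']; linear_combination hn2'.symm
    zify [show x ≤ n by omega, show 1 ≤ n - x by omega]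
    linear_combination hsq'
end

section
/- The integer solutions (n, x) with n > 2 and 0 ≤ x ≤ n-3 of the equation C(n,x) + C(n,x+3) = C(n,x+1) + C(n,x+2) are exactly those of the form n = k^2 - 3, x = (k^2 - k)/2 - 3 or x = (k^2 + k)/2 - 3, for an integer k ≥ 3. -/
open Nat


theorem arith15 (x m : ℕ) :
    ((x+1)*(x+2)*(x+3) + (m+1)*(m+2)*(m+3)
      = (x+2)*(x+3)*(m+3) + (x+3)*(m+2)*(m+3)) ↔
    ∃ k : ℕ, 3 ≤ k ∧ x + m + 3 + 3 = k ^ 2 ∧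
      (2 * (x + 3) = k ^ 2 - k ∨ 2 * (x + 3) = k ^ 2 + k) := by
  constructor
  · intro h
    have h' : ((m : ℤ) - x)^2 = (x : ℤ) + m + 6 := by
      have hz : ((x:ℤ)+1)*(x+2)*(x+3) + ((m:ℤ)+1)*(m+2)*(m+3)
          = ((x:ℤ)+2)*(x+3)*(m+3) + ((x:ℤ)+3)*(m+2)*(m+3) := by exact_mod_cast h
      nlinarith [hz, sq_nonneg ((m:ℤ)-x), sq_nonneg ((m:ℤ)+x)]
    set t : ℤ := (m : ℤ) - x with ht
    set k : ℕ := t.natAbs with hkdef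
    have habs : ((k:ℤ))^2 = t^2 := by rw [hkdef, ← Int.abs_eq_natAbs, sq_abs]
    have hsq : k^2 = x + m + 6 := by exact_mod_cast habs.trans h'
    refine ⟨k, by nlinarith [hsq], by omega, ?_⟩
    have hk : k ≤ k^2 := Nat.le_self_pow (by norm_num) _
    rcases Int.natAbs_eq t with he | he
    · left
      have hz : 2 * ((x:ℤ) + 3) = (k:ℤ)^2 - k := by
        have h1 : (m:ℤ) - x = (k:ℤ) := ht.symm.trans he
        have h2 : (k:ℤ)^2 = (x:ℤ) + m + 6 := habs.trans h'
        linarith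
      zify [hk]; linarith [hz]
    · right
      have hz : 2 * ((x:ℤ) + 3) = (k:ℤ)^2 + k := by
        have h1 : (m:ℤ) - x = -(k:ℤ) := ht.symm.trans he
        have h2 : (k:ℤ)^2 = (x:ℤ) + m + 6 := habs.trans h'
        linarith
      exact_mod_cast hz
  · rintro ⟨k, hk3, hk2, hd | hd⟩
    · have hk : k ≤ k^2 := Nat.le_self_pow (by norm_num) _
      have h1 : 2 * ((x:ℤ) + 3) = (k:ℤ)^2 - k := by zify [hk] at hd; linarith [hd]
      have h2 : ((x:ℤ) + m + 6) = (k:ℤ)^2 := by exact_mod_cast hk2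
      have h3 : (m:ℤ) - x = (k:ℤ) := by linarith
      have hz : ((x:ℤ)+1)*(x+2)*(x+3) + ((m:ℤ)+1)*(m+2)*(m+3)
          = ((x:ℤ)+2)*(x+3)*(m+3) + ((x:ℤ)+3)*(m+2)*(m+3) := by
        linear_combination ((x:ℤ)+m+4)*((m:ℤ)-x+k)*h3 - ((x:ℤ)+m+4)*h2
      exact_mod_cast hz
    · have h1 : 2 * ((x:ℤ) + 3) = (k:ℤ)^2 + k := by exact_mod_cast hd
      have h2 : ((x:ℤ) + m + 6) = (k:ℤ)^2 := by exact_mod_cast hk2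
      have h3 : (m:ℤ) - x = -(k:ℤ) := by linarith
      have hz : ((x:ℤ)+1)*(x+2)*(x+3) + ((m:ℤ)+1)*(m+2)*(m+3)
          = ((x:ℤ)+2)*(x+3)*(m+3) + ((x:ℤ)+3)*(m+2)*(m+3) := by
        linear_combination ((x:ℤ)+m+4)*((m:ℤ)-x-k)*h3 - ((x:ℤ)+m+4)*h2
      exact_mod_cast hz

theorem stmt_15 (n x : ℕ) (hn : 2 < n) (hx : x ≤ n - 3) :
    (n.choose x + n.choose (x + 3) = n.choose (x + 1) + n.choose (x + 2)) ↔
      ∃ k : ℕ, 3 ≤ k ∧ n + 3 = k ^ 2 ∧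
        (2 * (x + 3) = k ^ 2 - k ∨ 2 * (x + 3) = k ^ 2 + k) := by
  obtain ⟨m, rfl⟩ : ∃ m, n = x + m + 3 := ⟨n - x - 3, by omega⟩
  -- factorial identities
  have fx3 : (x + 3)! = x ! * ((x+1)*(x+2)*(x+3)) := by
    rw [show x+3 = (x+2)+1 from rfl, show x+2 = (x+1)+1 from rfl,
      Nat.factorial_succ, Nat.factorial_succ, Nat.factorial_succ]; ring
  have fx3' : (x + 3)! = (x+1)! * ((x+2)*(x+3)) := by
    rw [show x+3 = (x+2)+1 from rfl, show x+2 = (x+1)+1 from rfl,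
      Nat.factorial_succ, Nat.factorial_succ]; ring
  have fx3'' : (x + 3)! = (x+2)! * (x+3) := by
    rw [show x+3 = (x+2)+1 from rfl, Nat.factorial_succ]; ring
  have fm3 : (m + 3)! = m ! * ((m+1)*(m+2)*(m+3)) := by
    rw [show m+3 = (m+2)+1 from rfl, show m+2 = (m+1)+1 from rfl,
      Nat.factorial_succ, Nat.factorial_succ, Nat.factorial_succ]; ring
  have fm3' : (m + 3)! = (m+1)! * ((m+2)*(m+3)) := by
    rw [show m+3 = (m+2)+1 from rfl, show m+2 = (m+1)+1 from rfl,
      Nat.factorial_succ, Nat.factorial_succ]; ring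
  have fm3'' : (m + 3)! = (m+2)! * (m+3) := by
    rw [show m+3 = (m+2)+1 from rfl, Nat.factorial_succ]; ring
  have b0 := Nat.choose_mul_factorial_mul_factorial (show x ≤ x+m+3 by omega)
  have b1 := Nat.choose_mul_factorial_mul_factorial (show x+1 ≤ x+m+3 by omega)
  have b2 := Nat.choose_mul_factorial_mul_factorial (show x+2 ≤ x+m+3 by omega)
  have b3 := Nat.choose_mul_factorial_mul_factorial (show x+3 ≤ x+m+3 by omega)
  rw [show x+m+3-x = m+3 by omega] at b0
  rw [show x+m+3-(x+1) = m+2 by omega] at b1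
  rw [show x+m+3-(x+2) = m+1 by omega] at b2
  rw [show x+m+3-(x+3) = m by omega] at b3
  set N := (x+m+3)! with hN
  have T0 : (x+m+3).choose x * ((x+3)! * (m+3)!) = N * ((x+1)*(x+2)*(x+3)) := by
    rw [fx3]
    calc (x+m+3).choose x * (x ! * ((x+1)*(x+2)*(x+3)) * (m+3)!)
        = ((x+m+3).choose x * x ! * (m+3)!) * ((x+1)*(x+2)*(x+3)) := by ring
      _ = N * ((x+1)*(x+2)*(x+3)) := by rw [b0]
  have T1 : (x+m+3).choose (x+1) * ((x+3)! * (m+3)!) = N * ((x+2)*(x+3)*(m+3)) := by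
    rw [fx3', fm3'']
    calc (x+m+3).choose (x+1) * ((x+1)! * ((x+2)*(x+3)) * ((m+2)! * (m+3)))
        = ((x+m+3).choose (x+1) * (x+1)! * (m+2)!) * ((x+2)*(x+3)*(m+3)) := by ring
      _ = N * ((x+2)*(x+3)*(m+3)) := by rw [b1]
  have T2 : (x+m+3).choose (x+2) * ((x+3)! * (m+3)!) = N * ((x+3)*(m+2)*(m+3)) := by
    rw [fx3'', fm3']
    calc (x+m+3).choose (x+2) * ((x+2)! * (x+3) * ((m+1)! * ((m+2)*(m+3))))
        = ((x+m+3).choose (x+2) * (x+2)! * (m+1)!) * ((x+3)*(m+2)*(m+3)) := by ring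
      _ = N * ((x+3)*(m+2)*(m+3)) := by rw [b2]
  have T3 : (x+m+3).choose (x+3) * ((x+3)! * (m+3)!) = N * ((m+1)*(m+2)*(m+3)) := by
    rw [fm3]
    calc (x+m+3).choose (x+3) * ((x+3)! * (m ! * ((m+1)*(m+2)*(m+3))))
        = ((x+m+3).choose (x+3) * (x+3)! * m !) * ((m+1)*(m+2)*(m+3)) := by ring
      _ = N * ((m+1)*(m+2)*(m+3)) := by rw [b3]
  have hNpos : 0 < N := Nat.factorial_pos _
  have hfac : 0 < (x+3)! * (m+3)! := Nat.mul_pos (Nat.factorial_pos _) (Nat.factorial_pos _)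
  have key : ((x+m+3).choose x + (x+m+3).choose (x + 3) =
      (x+m+3).choose (x + 1) + (x+m+3).choose (x + 2)) ↔
      ((x+1)*(x+2)*(x+3) + (m+1)*(m+2)*(m+3)
        = (x+2)*(x+3)*(m+3) + (x+3)*(m+2)*(m+3)) := by
    constructor
    · intro h
      have h' := congrArg (· * ((x+3)! * (m+3)!)) h
      rw [add_mul, add_mul, T0, T1, T2, T3, ← mul_add, ← mul_add] at h'
      exact Nat.eq_of_mul_eq_mul_left hNpos h'
    · intro h
      have h' : ((x+m+3).choose x + (x+m+3).choose (x + 3)) * ((x+3)! * (m+3)!)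
          = ((x+m+3).choose (x + 1) + (x+m+3).choose (x + 2)) * ((x+3)! * (m+3)!) := by
        rw [add_mul, add_mul, T0, T1, T2, T3, ← mul_add, ← mul_add, h]
      exact Nat.eq_of_mul_eq_mul_right hfac h'
  rw [key]
  exact arith15 x m
end

section
/- Let k ≥ 0 be an integer, t = 2k^2 + 8k + 6, and n = 2t + 1 = 4k^2 + 16k + 13. Then C(n, t-k-3) + C(n, t-k) = C(n, t-k-1) + C(n, t-k-2). -/
lemma aux_choose (N j u : ℕ) (h0 : N - j = u)
    (key : (j + 1) * (j + 2) * (j + 3) + u * ((u - 1) * (u - 2)) =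
      u * ((j + 2) * (j + 3)) + u * ((u - 1) * (j + 3))) :
    N.choose j + N.choose (j + 3) = N.choose (j + 1) + N.choose (j + 2) := by
  have hNj1 : N - (j + 1) = u - 1 := by omega
  have hNj2 : N - (j + 2) = u - 2 := by omega
  have r1 : N.choose (j + 1) * (j + 1) = N.choose j * u := by
    rw [Nat.choose_succ_right_eq, h0]
  have r2 : N.choose (j + 2) * (j + 2) = N.choose (j + 1) * (u - 1) := by
    rw [Nat.choose_succ_right_eq, hNj1]
  have r3 : N.choose (j + 3) * (j + 3) = N.choose (j + 2) * (u - 2) := by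
    rw [Nat.choose_succ_right_eq, hNj2]
  have hD : 0 < (j + 1) * (j + 2) * (j + 3) := by positivity
  apply Nat.eq_of_mul_eq_mul_right hD
  have c1 : N.choose (j + 1) * ((j + 1) * (j + 2) * (j + 3)) =
      N.choose j * u * ((j + 2) * (j + 3)) := by
    calc N.choose (j + 1) * ((j + 1) * (j + 2) * (j + 3))
        = (N.choose (j + 1) * (j + 1)) * ((j + 2) * (j + 3)) := by ring
      _ = N.choose j * u * ((j + 2) * (j + 3)) := by rw [r1]
  have c2 : N.choose (j + 2) * ((j + 1) * (j + 2) * (j + 3)) =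
      N.choose j * u * ((u - 1) * (j + 3)) := by
    calc N.choose (j + 2) * ((j + 1) * (j + 2) * (j + 3))
        = (N.choose (j + 2) * (j + 2)) * ((j + 1) * (j + 3)) := by ring
      _ = (N.choose (j + 1) * (j + 1)) * ((u - 1) * (j + 3)) := by rw [r2]; ring
      _ = N.choose j * u * ((u - 1) * (j + 3)) := by rw [r1]
  have c3 : N.choose (j + 3) * ((j + 1) * (j + 2) * (j + 3)) =
      N.choose j * (u * ((u - 1) * (u - 2))) := by
    calc N.choose (j + 3) * ((j + 1) * (j + 2) * (j + 3))
        = (N.choose (j + 3) * (j + 3)) * ((j + 1) * (j + 2)) := by ring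
      _ = (N.choose (j + 2) * (j + 2)) * ((j + 1) * (u - 2)) := by rw [r3]; ring
      _ = (N.choose (j + 1) * (j + 1)) * ((u - 1) * (u - 2)) := by rw [r2]; ring
      _ = N.choose j * (u * ((u - 1) * (u - 2))) := by rw [r1]; ring
  calc (N.choose j + N.choose (j + 3)) * ((j + 1) * (j + 2) * (j + 3))
      = N.choose j * ((j + 1) * (j + 2) * (j + 3)) +
        N.choose (j + 3) * ((j + 1) * (j + 2) * (j + 3)) := by ring
    _ = N.choose j * ((j + 1) * (j + 2) * (j + 3) + u * ((u - 1) * (u - 2))) := by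
        rw [c3]; ring
    _ = N.choose j * (u * ((j + 2) * (j + 3)) + u * ((u - 1) * (j + 3))) := by rw [key]
    _ = N.choose j * u * ((j + 2) * (j + 3)) + N.choose j * u * ((u - 1) * (j + 3)) := by
        ring
    _ = (N.choose (j + 1) + N.choose (j + 2)) * ((j + 1) * (j + 2) * (j + 3)) := by
        rw [← c1, ← c2]; ring

theorem stmt_18 (k t n : ℕ) (ht : t = 2 * k ^ 2 + 8 * k + 6) (hn : n = 2 * t + 1) :
    n.choose (t - k - 3) + n.choose (t - k) =
      n.choose (t - k - 1) + n.choose (t - k - 2) := by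
  have e0 : t - k - 3 = 2 * k ^ 2 + 7 * k + 3 := by omega
  have e1 : t - k - 2 = (2 * k ^ 2 + 7 * k + 3) + 1 := by omega
  have e2 : t - k - 1 = (2 * k ^ 2 + 7 * k + 3) + 2 := by omega
  have e3 : t - k = (2 * k ^ 2 + 7 * k + 3) + 3 := by omega
  rw [e0, e1, e2, e3, add_comm (n.choose (2 * k ^ 2 + 7 * k + 3 + 2))]
  apply aux_choose n (2 * k ^ 2 + 7 * k + 3) (2 * k ^ 2 + 9 * k + 10)
  · omega
  · have hu1 : 2 * k ^ 2 + 9 * k + 10 - 1 = 2 * k ^ 2 + 9 * k + 9 := by omega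
    have hu2 : 2 * k ^ 2 + 9 * k + 10 - 2 = 2 * k ^ 2 + 9 * k + 8 := by omega
    rw [hu1, hu2]; ring
end
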